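/- Let ℓ : ℝⁿ → ℝ be convex and L-smooth (gradient is L-Lipschitz), let G be symmetric positive-definite with smallest eigenvalue λ_min, and let s ∈ (0, λ_min/L). Then the preconditioned gradient step u ↦ u - s G^{-1} ∇ℓ(u) is non-expansive with respect to the norm ‖·‖_G. -/

import Mathlib

/-!
Write `d = u₁ - u₂` and `e = ∇ℓ u₁ - ∇ℓ u₂`. The squared `G`-norm of the difference of the two
steps is `‖d‖_G² - 2 s ⟪e, d⟫ + s² ⟪e, G⁻¹ e⟫`. The gradient of a convex `L`-smooth function is
`1/L`-co-coercive, `‖e‖² / L ≤ ⟪e, d⟫` (Baillon–Haddad), and `G ≥ λ_min` gives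
`⟪e, G⁻¹ e⟫ ≤ ‖e‖² / λ_min`. Since `s < λ_min / L`, the last term is at most `s ⟪e, d⟫`.
-/

noncomputable def normG {n : ℕ} (G : Matrix (Fin n) (Fin n) ℝ) (u : Fin n → ℝ) : ℝ :=
  Real.sqrt (dotProduct u (G.mulVec u))

def toE {n : ℕ} (v : Fin n → ℝ) : EuclideanSpace ℝ (Fin n) := WithLp.toLp 2 v

open scoped RealInnerProductSpace
open Matrix Unitary

section SmoothConvex

variable {E : Type*} [NormedAddCommGroup E] [InnerProductSpace ℝ E] [CompleteSpace E]
  {f : E → ℝ} {f' : E → E} {L : ℝ}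

theorem HasGradientAt.hasDerivAt_comp_add_smul {x v y : E} {t : ℝ}
    (hf : HasGradientAt f y (x + t • v)) :
    HasDerivAt (fun t : ℝ => f (x + t • v)) ⟪y, v⟫ t := by
  have hline : HasDerivAt (fun t : ℝ => x + t • v) v t := by
    simpa using ((hasDerivAt_id t).smul_const v).const_add x
  simpa [Function.comp_def] using
    (hasGradientAt_iff_hasFDerivAt.1 hf).comp_hasDerivAt t hline

theorem ConvexOn.add_inner_sub_le_of_hasGradientAt (hf : ConvexOn ℝ Set.univ f) {x y : E}
    (hx : HasGradientAt f y x) (z : E) : f x + ⟪y, z - x⟫ ≤ f z := by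
  have hline : ConvexOn ℝ Set.univ fun t : ℝ => f (x + t • (z - x)) := by
    simpa [Function.comp_def, AffineMap.lineMap_apply, add_comm] using
      hf.comp_affineMap (AffineMap.lineMap x z)
  have hderiv : HasDerivAt (fun t : ℝ => f (x + t • (z - x))) ⟪y, z - x⟫ 0 :=
    HasGradientAt.hasDerivAt_comp_add_smul (by simpa using hx)
  have := hline.le_slope_of_hasDerivAt (Set.mem_univ 0) (Set.mem_univ 1) zero_lt_one hderiv
  simp only [slope_def_field, zero_smul, add_zero, one_smul, add_sub_cancel, sub_zero,
    div_one] at this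
  linarith

theorem le_add_inner_add_sq_of_lipschitz_gradient (hf : ∀ x, HasGradientAt f (f' x) x)
    (hLip : ∀ x y, ‖f' x - f' y‖ ≤ L * ‖x - y‖) (x y : E) :
    f y ≤ f x + ⟪f' x, y - x⟫ + L / 2 * ‖y - x‖ ^ 2 := by
  set v := y - x
  set ψ : ℝ → ℝ := fun t => f (x + t • v) - t * ⟪f' x, v⟫ - L / 2 * ‖v‖ ^ 2 * t ^ 2
  have hψ : ∀ t, HasDerivAt ψ (⟪f' (x + t • v) - f' x, v⟫ - L * ‖v‖ ^ 2 * t) t := by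
    intro t
    refine ((((hf _).hasDerivAt_comp_add_smul).sub
      ((hasDerivAt_id t).mul_const ⟪f' x, v⟫)).sub
      ((hasDerivAt_pow 2 t).const_mul (L / 2 * ‖v‖ ^ 2))).congr_deriv ?_
    rw [inner_sub_left]
    simp only [Nat.cast_ofNat, one_mul]
    ring
  have hslope : ∀ t ∈ interior (Set.Icc (0 : ℝ) 1),
      ⟪f' (x + t • v) - f' x, v⟫ - L * ‖v‖ ^ 2 * t ≤ 0 := by
    intro t ht
    rw [interior_Icc] at ht
    have := hLip (x + t • v) x
    rw [sub_nonpos]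
    calc ⟪f' (x + t • v) - f' x, v⟫ ≤ ‖f' (x + t • v) - f' x‖ * ‖v‖ := real_inner_le_norm _ _
      _ ≤ L * ‖t • v‖ * ‖v‖ := by gcongr; simpa using this
      _ = L * ‖v‖ ^ 2 * t := by rw [norm_smul, Real.norm_of_nonneg ht.1.le]; ring
  have hanti : AntitoneOn ψ (Set.Icc 0 1) :=
    antitoneOn_of_hasDerivWithinAt_nonpos (convex_Icc 0 1)
      (HasDerivAt.continuousOn fun t _ => hψ t) (fun t _ => (hψ t).hasDerivWithinAt) hslope
  have := hanti (Set.left_mem_Icc.2 zero_le_one) (Set.right_mem_Icc.2 zero_le_one) zero_le_one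
  simp only [ψ, v, zero_smul, add_zero, one_smul, add_sub_cancel, zero_mul, sub_zero,
    one_mul, ne_eq, OfNat.ofNat_ne_zero, not_false_eq_true, zero_pow, mul_zero, one_pow,
    mul_one] at this
  linarith

theorem add_inner_sub_add_norm_sq_div_le (hL : 0 < L) (hconv : ConvexOn ℝ Set.univ f)
    (hf : ∀ x, HasGradientAt f (f' x) x) (hLip : ∀ x y, ‖f' x - f' y‖ ≤ L * ‖x - y‖)
    (x y : E) :
    f x + ⟪f' x, y - x⟫ + ‖f' y - f' x‖ ^ 2 / (2 * L) ≤ f y := by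
  -- Convexity at `x` and the descent lemma at `y`, both evaluated at the gradient step from `y`.
  set e := f' y - f' x
  set z := y - L⁻¹ • e
  have hlower := hconv.add_inner_sub_le_of_hasGradientAt (hf x) z
  have hupper := le_add_inner_add_sq_of_lipschitz_gradient hf hLip y z
  have hzy : z - y = -(L⁻¹ • e) := by simp [z]
  have hzx : z - x = (y - x) - L⁻¹ • e := by simp only [z]; abel
  rw [hzy, inner_neg_right, real_inner_smul_right, norm_neg, norm_smul,
    Real.norm_of_nonneg (inv_nonneg.2 hL.le)] at hupper
  rw [hzx, inner_sub_right, real_inner_smul_right] at hlower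
  have he : ⟪f' y, e⟫ - ⟪f' x, e⟫ = ‖e‖ ^ 2 := by
    rw [← inner_sub_left, real_inner_self_eq_norm_sq]
  field_simp at hupper hlower ⊢
  nlinarith

theorem norm_sq_div_le_inner_sub_of_lipschitz_gradient (hL : 0 < L)
    (hconv : ConvexOn ℝ Set.univ f) (hf : ∀ x, HasGradientAt f (f' x) x)
    (hLip : ∀ x y, ‖f' x - f' y‖ ≤ L * ‖x - y‖) (x y : E) :
    ‖f' x - f' y‖ ^ 2 / L ≤ ⟪f' x - f' y, x - y⟫ := by
  have hxy := add_inner_sub_add_norm_sq_div_le hL hconv hf hLip x y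
  have hyx := add_inner_sub_add_norm_sq_div_le hL hconv hf hLip y x
  rw [norm_sub_rev] at hxy
  rw [inner_sub_left, ← neg_sub x y, inner_neg_right] at *
  field_simp at *
  linarith

end SmoothConvex

namespace Matrix

variable {ι : Type*} [Fintype ι] [DecidableEq ι]

theorem IsHermitian.posSemidef_sub_smul_one {A : Matrix ι ι ℝ} (hA : A.IsHermitian) {c : ℝ}
    (hc : ∀ i, c ≤ hA.eigenvalues i) : (A - c • 1).PosSemidef := by
  have hconj : conjStarAlgAut ℝ _ hA.eigenvectorUnitary (c • 1) = c • 1 := by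
    rw [map_smul, map_one]
  conv => enter [1, 1]; rw [hA.spectral_theorem]
  rw [← hconj, ← map_sub, smul_one_eq_diagonal, diagonal_sub]
  simpa [isUnit_coe.posSemidef_star_right_conjugate_iff] using hc

theorem IsHermitian.mul_dotProduct_self_le {A : Matrix ι ι ℝ} (hA : A.IsHermitian) {c : ℝ}
    (hc : ∀ i, c ≤ hA.eigenvalues i) (x : ι → ℝ) : c * (x ⬝ᵥ x) ≤ x ⬝ᵥ A *ᵥ x := by
  have := (hA.posSemidef_sub_smul_one hc).dotProduct_mulVec_nonneg x
  rw [star_trivial, sub_mulVec, dotProduct_sub, smul_mulVec, one_mulVec, dotProduct_smul,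
    smul_eq_mul] at this
  linarith

theorem dotProduct_inv_mulVec_le {G : Matrix ι ι ℝ} (hG : IsUnit G.det) {c : ℝ} (hc : 0 < c)
    (hlow : ∀ y, c * (y ⬝ᵥ y) ≤ y ⬝ᵥ G *ᵥ y) (x : ι → ℝ) :
    x ⬝ᵥ G⁻¹ *ᵥ x ≤ c⁻¹ * (x ⬝ᵥ x) := by
  set y := G⁻¹ *ᵥ x
  have hGy : G *ᵥ y = x := by rw [mulVec_mulVec, mul_nonsing_inv G hG, one_mulVec]
  have hy : c * (y ⬝ᵥ y) ≤ x ⬝ᵥ y := by simpa [hGy, dotProduct_comm y x] using hlow y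
  have hsq : 0 ≤ (x - c • y) ⬝ᵥ (x - c • y) := dotProduct_self_star_nonneg _
  simp only [sub_dotProduct, dotProduct_sub, smul_dotProduct, dotProduct_smul, smul_eq_mul,
    dotProduct_comm y x] at hsq
  rw [le_inv_mul_iff₀ hc]
  nlinarith

theorem sub_smul_inv_mulVec_dotProduct_mulVec {G : Matrix ι ι ℝ} (hsymm : G.IsSymm)
    (hG : IsUnit G.det) (s : ℝ) (d e : ι → ℝ) :
    (d - s • G⁻¹ *ᵥ e) ⬝ᵥ G *ᵥ (d - s • G⁻¹ *ᵥ e) =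
      d ⬝ᵥ G *ᵥ d - 2 * s * (e ⬝ᵥ d) + s ^ 2 * (e ⬝ᵥ G⁻¹ *ᵥ e) := by
  have hGe : G *ᵥ G⁻¹ *ᵥ e = e := by rw [mulVec_mulVec, mul_nonsing_inv G hG, one_mulVec]
  have hswap : G⁻¹ *ᵥ e ⬝ᵥ G *ᵥ d = e ⬝ᵥ d := by
    rw [dotProduct_mulVec, ← mulVec_transpose, hsymm.eq, hGe, dotProduct_comm]
  simp only [mulVec_sub, mulVec_smul, hGe, sub_dotProduct, dotProduct_sub, smul_dotProduct,
    dotProduct_smul, smul_eq_mul, hswap, dotProduct_comm (G⁻¹ *ᵥ e) e, dotProduct_comm d e]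
  ring

theorem dotProduct_mulVec_sub_smul_inv_mulVec_le {G : Matrix ι ι ℝ} (hsymm : G.IsSymm)
    (hG : IsUnit G.det) {s : ℝ} (hs : 0 ≤ s) {d e : ι → ℝ}
    (he : s * (e ⬝ᵥ G⁻¹ *ᵥ e) ≤ 2 * (e ⬝ᵥ d)) :
    (d - s • G⁻¹ *ᵥ e) ⬝ᵥ G *ᵥ (d - s • G⁻¹ *ᵥ e) ≤ d ⬝ᵥ G *ᵥ d := by
  rw [sub_smul_inv_mulVec_dotProduct_mulVec hsymm hG]
  nlinarith [mul_le_mul_of_nonneg_left he hs]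

end Matrix

theorem stmt14_general {n : ℕ} (G : Matrix (Fin n) (Fin n) ℝ) (hG : G.PosDef)
    (ℓ : EuclideanSpace ℝ (Fin n) → ℝ) (g : EuclideanSpace ℝ (Fin n) → EuclideanSpace ℝ (Fin n))
    (L : ℝ) (hL : 0 < L)
    (hgrad : ∀ u, HasGradientAt ℓ (g u) u)
    (hconv : ConvexOn ℝ Set.univ ℓ)
    (hLip : ∀ u₁ u₂, ‖g u₁ - g u₂‖ ≤ L * ‖u₁ - u₂‖)
    (s : ℝ) (hs : s ∈ Set.Ioo 0 ((⨅ i, hG.1.eigenvalues i) / L)) :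
    ∀ u₁ u₂ : EuclideanSpace ℝ (Fin n),
      normG G ((u₁ - s • toE ((G⁻¹).mulVec (g u₁)))
             - (u₂ - s • toE ((G⁻¹).mulVec (g u₂))))
        ≤ normG G (u₁ - u₂) := by
  intro u₁ u₂
  obtain ⟨hs₀, hsμ⟩ := hs
  set μ := ⨅ i, hG.1.eigenvalues i
  have hμ : 0 < μ := (div_pos_iff_of_pos_right hL).1 (hs₀.trans hsμ)
  have hdet : IsUnit G.det := isUnit_iff_ne_zero.2 hG.det_pos.ne'
  set d : Fin n → ℝ := u₁ - u₂
  set e : Fin n → ℝ := g u₁ - g u₂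
  have hdiff : ((u₁ - s • toE ((G⁻¹).mulVec (g u₁))) - (u₂ - s • toE ((G⁻¹).mulVec (g u₂))) :
      Fin n → ℝ) = d - s • G⁻¹ *ᵥ e := by
    simp only [d, e, toE, mulVec_sub]
    module
  have hcoco : (e ⬝ᵥ e) / L ≤ e ⬝ᵥ d := by
    have := norm_sq_div_le_inner_sub_of_lipschitz_gradient hL hconv hgrad hLip u₁ u₂
    simp only [← real_inner_self_eq_norm_sq, EuclideanSpace.inner_eq_star_dotProduct,
      WithLp.ofLp_sub, star_trivial] at this
    linarith [dotProduct_comm d e]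
  have hinv : e ⬝ᵥ G⁻¹ *ᵥ e ≤ μ⁻¹ * (e ⬝ᵥ e) :=
    dotProduct_inv_mulVec_le hdet hμ
      (hG.1.mul_dotProduct_self_le fun i => ciInf_le (Finite.bddBelow_range _) i) e
  have hee : 0 ≤ e ⬝ᵥ e := dotProduct_self_star_nonneg e
  have hcomp : s * (e ⬝ᵥ G⁻¹ *ᵥ e) ≤ 2 * (e ⬝ᵥ d) := by
    rw [lt_div_iff₀ hL] at hsμ
    calc s * (e ⬝ᵥ G⁻¹ *ᵥ e) ≤ s * (μ⁻¹ * (e ⬝ᵥ e)) := by gcongr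
      _ ≤ (e ⬝ᵥ e) / L := by field_simp; nlinarith
      _ ≤ 2 * (e ⬝ᵥ d) := by linarith [div_nonneg hee hL.le]
  rw [hdiff]
  exact Real.sqrt_le_sqrt
    (dotProduct_mulVec_sub_smul_inv_mulVec_le (isHermitian_iff_isSymm.1 hG.1) hdet hs₀.le hcomp)

theorem stmt14 {n : ℕ} (hn : 0 < n) (G : Matrix (Fin n) (Fin n) ℝ) (hG : G.PosDef)
    (ℓ : EuclideanSpace ℝ (Fin n) → ℝ) (g : EuclideanSpace ℝ (Fin n) → EuclideanSpace ℝ (Fin n))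
    (L : ℝ) (hL : 0 < L)
    (hgrad : ∀ u, HasGradientAt ℓ (g u) u)
    (hconv : ConvexOn ℝ Set.univ ℓ)
    (hLip : ∀ u₁ u₂, ‖g u₁ - g u₂‖ ≤ L * ‖u₁ - u₂‖)
    (s : ℝ) (hs : s ∈ Set.Ioo 0 ((⨅ i, hG.1.eigenvalues i) / L)) :
    ∀ u₁ u₂ : EuclideanSpace ℝ (Fin n),
      normG G ((u₁ - s • toE ((G⁻¹).mulVec (g u₁)))
             - (u₂ - s • toE ((G⁻¹).mulVec (g u₂))))
        ≤ normG G (u₁ - u₂) :=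
  stmt14_general G hG ℓ g L hL hgrad hconv hLip s hs
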